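/- arXiv:2408.15492 — 2 statements merged into one kernel-verified Lean document; each statement's English description precedes it below -/
import Mathlib

section
/- A finite-state control system is constrained I(Ω)-stabilizable from initial state s0 with all intermediate states in a constraint set Cα if and only if the set of constrained reachable states from s0 intersects I(Ω), where I(Ω) is the largest constrained control invariant subset of Ω (assuming s0 ∈ Cα and Ω ⊆ Cα). -/
def ConstrainedControlInvariant {S U : Type*} (C : S → Set U) (f : S → U → S)
    (M : Set S) : Prop :=
  ∀ s ∈ M, ∃ u ∈ C s, f s u ∈ M

def largestInvariant {S U : Type*} (C : S → Set U) (f : S → U → S) (Ω : Set S) : Set S :=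
  ⋃₀ {M : Set S | ConstrainedControlInvariant C f M ∧ M ⊆ Ω}

/-- `α, u` is an admissible trajectory of the system from `α 0`. -/
def AdmissibleTraj {S U : Type*} (C : S → Set U) (f : S → U → S)
    (α : ℕ → S) (u : ℕ → U) : Prop :=
  ∀ k, u k ∈ C (α k) ∧ α (k + 1) = f (α k) (u k)

/-- The constrained reachable set `R(s0)`: states reached by some finite admissible input
sequence with all intermediate states in `Cα`. -/
def ConstrainedReachable {S U : Type*} (C : S → Set U) (f : S → U → S)
    (Cα : Set S) (s0 : S) : Set S :=
  {s | ∃ (K : ℕ) (α : ℕ → S) (u : ℕ → U), α 0 = s0 ∧ AdmissibleTraj C f α u ∧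
        (∀ k ≤ K, α k ∈ Cα) ∧ α K = s}

/-- Constrained `M`-stabilizability from `s0`. -/
def ConstrainedStabilizable {S U : Type*} (C : S → Set U) (f : S → U → S)
    (Cα : Set S) (M : Set S) (s0 : S) : Prop :=
  ∃ (α : ℕ → S) (u : ℕ → U) (K0 : ℕ), α 0 = s0 ∧ AdmissibleTraj C f α u ∧
    (∀ k < K0, α k ∈ Cα) ∧ (∀ k ≥ K0, α k ∈ M)

/-!
A state of the invariant set `M` can be kept in `M` forever by choosing, at each step, an
admissible input that leads back into `M`. Hence a trajectory that reaches `M` inside `Cα`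
can be continued by such a tail, which stabilizes it; conversely the state at which a
stabilizing trajectory enters `M` for good is constrained reachable, as long as `M ⊆ Cα`.
For `M = I(Ω)` this holds because `I(Ω) ⊆ Ω ⊆ Cα`.
-/

section

variable {S U : Type*} {C : S → Set U} {f : S → U → S}

theorem largestInvariant_subset (Ω : Set S) : largestInvariant C f Ω ⊆ Ω :=
  Set.sUnion_subset fun _ hM => hM.2

theorem constrainedControlInvariant_largestInvariant (Ω : Set S) :
    ConstrainedControlInvariant C f (largestInvariant C f Ω) := by
  rintro s ⟨M, hM, hsM⟩
  obtain ⟨u, hu, hfu⟩ := hM.1 s hsM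
  exact ⟨u, hu, M, hM, hfu⟩

theorem ConstrainedControlInvariant.exists_admissibleTraj {M : Set S}
    (hM : ConstrainedControlInvariant C f M) {s : S} (hs : s ∈ M) :
    ∃ α u, α 0 = s ∧ AdmissibleTraj C f α u ∧ ∀ k, α k ∈ M := by
  choose u hu hfu using fun x : M => hM x x.2
  let next : M → M := fun x => ⟨f x (u x), hfu x⟩
  refine ⟨fun k => next^[k] ⟨s, hs⟩, fun k => u (next^[k] ⟨s, hs⟩), rfl,
    fun k => ⟨hu _, ?_⟩, fun k => (next^[k] _).2⟩
  exact congrArg Subtype.val (Function.iterate_succ_apply' next k _)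

theorem AdmissibleTraj.append {α β : ℕ → S} {u v : ℕ → U} (hα : AdmissibleTraj C f α u)
    (hβ : AdmissibleTraj C f β v) {K : ℕ} (hK : β 0 = α K) :
    AdmissibleTraj C f (fun k => if k < K then α k else β (k - K))
      (fun k => if k < K then u k else v (k - K)) := by
  intro k
  rcases lt_trichotomy (k + 1) K with h | h | h
  · simp [h, Nat.lt_of_succ_lt h, hα k]
  · subst h
    simp [hK, hα k]
  · have hk : ¬k < K := by omega
    simp only [hk, if_false, show ¬k + 1 < K by omega, show k + 1 - K = k - K + 1 by omega]
    exact hβ (k - K)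

theorem ConstrainedStabilizable.nonempty_constrainedReachable_inter {Cα M : Set S} {s0 : S}
    (h : ConstrainedStabilizable C f Cα M s0) (hM : M ⊆ Cα) :
    (ConstrainedReachable C f Cα s0 ∩ M).Nonempty := by
  obtain ⟨α, u, K0, hα0, hα, hpre, hpost⟩ := h
  refine ⟨α K0, ⟨K0, α, u, hα0, hα, fun k hk => ?_, rfl⟩, hpost K0 le_rfl⟩
  rcases hk.lt_or_eq with hk | rfl
  · exact hpre k hk
  · exact hM (hpost k le_rfl)

theorem ConstrainedControlInvariant.constrainedStabilizable_of_mem {Cα M : Set S} {s0 s : S}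
    (hM : ConstrainedControlInvariant C f M) (hreach : s ∈ ConstrainedReachable C f Cα s0)
    (hs : s ∈ M) : ConstrainedStabilizable C f Cα M s0 := by
  obtain ⟨K, α, u, hα0, hα, hαC, rfl⟩ := hreach
  obtain ⟨β, v, hβ0, hβ, hβM⟩ := hM.exists_admissibleTraj hs
  refine ⟨_, _, K, ?_, hα.append hβ hβ0, fun k hk => ?_, fun k hk => ?_⟩
  · rcases K.eq_zero_or_pos with rfl | hK
    · simpa [hβ0] using hα0
    · simpa [hK] using hα0
  · simpa [hk] using hαC k hk.le
  · simpa [not_lt.2 hk] using hβM (k - K)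

theorem ConstrainedControlInvariant.constrainedStabilizable_iff {Cα M : Set S}
    (hM : ConstrainedControlInvariant C f M) (hMC : M ⊆ Cα) (s0 : S) :
    ConstrainedStabilizable C f Cα M s0 ↔ (ConstrainedReachable C f Cα s0 ∩ M).Nonempty :=
  ⟨fun h => h.nonempty_constrainedReachable_inter hMC,
    fun ⟨_, hreach, hs⟩ => hM.constrainedStabilizable_of_mem hreach hs⟩

end

theorem constrainedStabilizable_iff_reach_largestInvariant_general
    {S U : Type*} (C : S → Set U) (f : S → U → S)
    (Cα Ω : Set S) (s0 : S) (hΩ : Ω ⊆ Cα) :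
    ConstrainedStabilizable C f Cα (largestInvariant C f Ω) s0 ↔
      (ConstrainedReachable C f Cα s0 ∩ largestInvariant C f Ω).Nonempty :=
  (constrainedControlInvariant_largestInvariant Ω).constrainedStabilizable_iff
    ((largestInvariant_subset Ω).trans hΩ) s0

theorem constrainedStabilizable_iff_reach_largestInvariant
    {S U : Type*} [Fintype S] (C : S → Set U) (f : S → U → S)
    (Cα Ω : Set S) (s0 : S) (hs0 : s0 ∈ Cα) (hΩ : Ω ⊆ Cα) :
    ConstrainedStabilizable C f Cα (largestInvariant C f Ω) s0 ↔
      (ConstrainedReachable C f Cα s0 ∩ largestInvariant C f Ω).Nonempty :=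
  constrainedStabilizable_iff_reach_largestInvariant_general C f Cα Ω s0 hΩ
end

section
/- In a finite directed weighted graph containing at least one cycle, there exists a simple cycle whose mean weight equals the minimum mean weight over all cycles. In particular, the minimum-mean cycle problem always admits a simple cycle as an optimizer. -/
/-- `c` is a cycle of the directed graph `E`: a closed walk, given as the list of
visited vertices (first and last vertex equal, with at least one edge). -/
def IsCycle {V : Type*} (E : V → V → Prop) (c : List V) : Prop :=
  2 ≤ c.length ∧ c.Chain' E ∧ c.head? = c.getLast?

/-- A simple cycle: no repeated vertices except the two endpoints. -/
def IsSimpleCycle {V : Type*} (E : V → V → Prop) (c : List V) : Prop :=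
  IsCycle E c ∧ c.dropLast.Nodup

/-- Total weight of a walk: sum of the weights of consecutive pairs. -/
def walkWeight {V : Type*} (w : V → V → ℝ) (c : List V) : ℝ :=
  ((c.zip c.tail).map (fun p => w p.1 p.2)).sum

/-- Mean weight of a cycle with `c.length - 1` edges. -/
noncomputable def meanWeight {V : Type*} (w : V → V → ℝ) (c : List V) : ℝ :=
  walkWeight w c / ((c.length : ℝ) - 1)

lemma walkWeight_single {V : Type*} (w : V → V → ℝ) (x : V) : walkWeight w [x] = 0 := rfl

lemma walkWeight_cons_cons {V : Type*} (w : V → V → ℝ) (a b : V) (l : List V) :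
    walkWeight w (a :: b :: l) = w a b + walkWeight w (b :: l) := by
  simp [walkWeight]

lemma walkWeight_append {V : Type*} (w : V → V → ℝ) (a : List V) (x : V) (b : List V) :
    walkWeight w (a ++ x :: b) = walkWeight w (a ++ [x]) + walkWeight w (x :: b) := by
  induction a with
  | nil => simp [walkWeight_single]
  | cons y a ih =>
    cases a with
    | nil => simp [walkWeight_cons_cons, walkWeight_single]
    | cons z a' =>
      simp only [List.cons_append, walkWeight_cons_cons] at *
      rw [ih]; ring

lemma exists_dup_split {V : Type*} {l : List V} (h : ¬ l.Nodup) :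
    ∃ (v : V) (A B C : List V), l = A ++ v :: B ++ v :: C := by
  classical
  induction l with
  | nil => simp at h
  | cons x t ih =>
    by_cases hx : x ∈ t
    · obtain ⟨B, C, rfl⟩ := List.append_of_mem hx
      exact ⟨x, [], B, C, by simp⟩
    · have ht : ¬ t.Nodup := fun hn => h (List.nodup_cons.2 ⟨hx, hn⟩)
      obtain ⟨v, A, B, C, rfl⟩ := ih ht
      exact ⟨v, x :: A, B, C, by simp⟩

lemma min_div_le {a b m n : ℝ} (hm : 0 < m) (hn : 0 < n) :
    min (a / m) (b / n) ≤ (a + b) / (m + n) := by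
  rcases le_total (a / m) (b / n) with hle | hle
  · calc min (a / m) (b / n) = a / m := min_eq_left hle
      _ ≤ (a + b) / (m + n) := by
        rw [div_le_div_iff₀ hm (by linarith)]
        rw [div_le_div_iff₀ hm hn] at hle
        nlinarith
  · calc min (a / m) (b / n) = b / n := min_eq_right hle
      _ ≤ (a + b) / (m + n) := by
        rw [div_le_div_iff₀ hn (by linarith)]
        rw [div_le_div_iff₀ hn hm] at hle
        nlinarith

/-- Every cycle has the form `x :: l ++ [x]`. -/
lemma cycle_form {V : Type*} {E : V → V → Prop} {c : List V} (hc : IsCycle E c) :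
    ∃ (x : V) (l : List V), c = x :: l ++ [x] := by
  obtain ⟨hlen, _, hhl⟩ := hc
  match c, hlen with
  | a :: b :: t, _ =>
    refine ⟨a, (b :: t).dropLast, ?_⟩
    have hne : (a :: b :: t) ≠ [] := by simp
    have h1 : (a :: b :: t).dropLast ++ [(a :: b :: t).getLast hne] = a :: b :: t :=
      List.dropLast_append_getLast hne
    have h2 : (a :: b :: t).getLast hne = a := by
      have := hhl
      rw [List.getLast?_eq_getLast hne] at this
      simpa using this.symm
    rw [h2] at h1
    simpa using h1.symm

lemma exists_simple_le {V : Type*} (E : V → V → Prop) (w : V → V → ℝ) :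
    ∀ n (c : List V), c.length ≤ n → IsCycle E c →
      ∃ s, IsSimpleCycle E s ∧ meanWeight w s ≤ meanWeight w c := by
  intro n
  induction n with
  | zero => intro c hl hc; exact absurd hc.1 (by omega)
  | succ n ih =>
    intro c hlen hc
    obtain ⟨x, l, rfl⟩ := cycle_form hc
    by_cases hnd : (x :: l).Nodup
    · refine ⟨x :: l ++ [x], ⟨hc, ?_⟩, le_refl _⟩
      have : (x :: l ++ [x]) = (x :: l) ++ [x] := by simp
      rw [this, List.dropLast_concat]
      exact hnd
    · obtain ⟨v, A, B, C, hsplit⟩ := exists_dup_split hnd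
      -- c = A ++ v :: B ++ v :: (C ++ [x])
      have hceq : x :: l ++ [x] = A ++ (v :: (B ++ (v :: (C ++ [x])))) := by
        rw [show x :: l ++ [x] = (x :: l) ++ [x] by simp, hsplit]; simp
      set c1 : List V := A ++ (v :: (C ++ [x])) with hc1def
      set c2 : List V := v :: (B ++ [v]) with hc2def
      -- regroup c as L1 ++ (L2 ++ L3)
      have hregroup : x :: l ++ [x] = (A ++ [v]) ++ ((B ++ [v]) ++ (C ++ [x])) := by
        rw [hceq]; simp
      have hchain := hc.2.1
      rw [hregroup, List.Chain', List.isChain_append] at hchain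
      obtain ⟨h1, h23, hd1⟩ := hchain
      rw [List.isChain_append] at h23
      obtain ⟨h2, h3, hd2⟩ := h23
      have hlast1 : (A ++ [v]).getLast? = some v := List.getLast?_concat
      have hlast2 : (B ++ [v]).getLast? = some v := List.getLast?_concat
      -- edge from v (end of L2) to head of L3
      have hedge23 : ∀ y ∈ (C ++ [x]).head?, E v y := fun y hy => hd2 v hlast2 y hy
      -- edge from v (end of L1) to head of L2
      have hedge12 : ∀ y ∈ (B ++ [v]).head?, E v y := by
        intro y hy
        apply hd1 v hlast1
        have : ((B ++ [v]) ++ (C ++ [x])).head? = (B ++ [v]).head? := by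
          cases B <;> simp
        rw [this]; exact hy
      have hchain1 : c1.Chain' E := by
        rw [hc1def, show A ++ (v :: (C ++ [x])) = (A ++ [v]) ++ (C ++ [x]) by simp,
          List.Chain', List.isChain_append]
        exact ⟨h1, h3, fun a ha y hy => by
          rw [hlast1] at ha; obtain rfl : v = a := by simpa using ha
          exact hedge23 y hy⟩
      have hchain2 : c2.Chain' E := by
        rw [hc2def, List.Chain', List.isChain_cons]
        exact ⟨hedge12, h2⟩
      -- head of c is x
      have hheadc : (A ++ (v :: (B ++ (v :: (C ++ [x]))))).head? = some x := by
        rw [← hceq]; simp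
      -- c1 is a cycle
      have hcyc1 : IsCycle E c1 := by
        refine ⟨by simp [hc1def]; omega, hchain1, ?_⟩
        have hlast : c1.getLast? = some x := by
          rw [hc1def, show A ++ (v :: (C ++ [x])) = (A ++ (v :: C)) ++ [x] by simp]
          exact List.getLast?_concat
        rw [hlast]
        cases A with
        | nil =>
          obtain rfl : v = x := by simpa using hheadc
          simp [hc1def]
        | cons a A' =>
          obtain rfl : a = x := by simpa using hheadc
          simp [hc1def]
      have hcyc2 : IsCycle E c2 := by
        refine ⟨by simp [hc2def], hchain2, ?_⟩
        rw [hc2def, show v :: (B ++ [v]) = (v :: B) ++ [v] by simp, List.getLast?_concat]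
        simp
      -- weights
      have hW : walkWeight w (x :: l ++ [x]) = walkWeight w c1 + walkWeight w c2 := by
        rw [hceq, walkWeight_append w A v (B ++ (v :: (C ++ [x]))),
          show v :: (B ++ (v :: (C ++ [x]))) = (v :: B) ++ (v :: (C ++ [x])) by simp,
          walkWeight_append w (v :: B) v (C ++ [x]),
          hc1def, walkWeight_append w A v (C ++ [x]), hc2def]
        simp only [show (v :: B) ++ [v] = v :: (B ++ [v]) by simp]
        ring
      -- lengths
      have hlc : ((x :: l ++ [x]).length : ℝ) - 1 = (A.length + B.length + C.length : ℝ) + 2 := by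
        rw [hceq]; push_cast [List.length_append, List.length_cons, List.length_nil]; ring
      have hl1 : ((c1.length : ℝ) - 1) = (A.length + C.length : ℝ) + 1 := by
        rw [hc1def]; push_cast [List.length_append, List.length_cons, List.length_nil]; ring
      have hl2 : ((c2.length : ℝ) - 1) = (B.length : ℝ) + 1 := by
        rw [hc2def]; push_cast [List.length_append, List.length_cons, List.length_nil]; ring
      have hm : (0:ℝ) < (c1.length : ℝ) - 1 := by rw [hl1]; positivity
      have hn : (0:ℝ) < (c2.length : ℝ) - 1 := by rw [hl2]; positivity
      have hmean : min (meanWeight w c1) (meanWeight w c2) ≤ meanWeight w (x :: l ++ [x]) := by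
        unfold meanWeight
        rw [hW]
        have := min_div_le (a := walkWeight w c1) (b := walkWeight w c2) hm hn
        have heq : ((x :: l ++ [x]).length : ℝ) - 1 =
            ((c1.length : ℝ) - 1) + ((c2.length : ℝ) - 1) := by
          rw [hlc, hl1, hl2]; ring
        rw [heq]; exact this
      -- recurse
      have hlenc : (x :: l ++ [x]).length = A.length + B.length + C.length + 3 := by
        rw [hceq]; simp [List.length_append]; omega
      have hlen1 : c1.length ≤ n := by
        have : c1.length = A.length + C.length + 2 := by simp [hc1def]; omega
        omega
      have hlen2 : c2.length ≤ n := by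
        have : c2.length = B.length + 2 := by simp [hc2def]
        omega
      obtain ⟨s1, hs1, hm1⟩ := ih c1 hlen1 hcyc1
      obtain ⟨s2, hs2, hm2⟩ := ih c2 hlen2 hcyc2
      rcases le_total (meanWeight w c1) (meanWeight w c2) with hcmp | hcmp
      · exact ⟨s1, hs1, le_trans hm1 (le_trans (le_min (le_refl _) hcmp |>.trans hmean |> fun _ => by
          exact (min_eq_left hcmp ▸ hmean)) (le_refl _))⟩
      · exact ⟨s2, hs2, le_trans hm2 (min_eq_right hcmp ▸ hmean)⟩


/-- In a finite directed weighted graph containing at least one cycle, some simple cycle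
attains the minimum mean weight over all cycles. -/
theorem exists_simple_minimum_mean_cycle {V : Type*} [Fintype V]
    (E : V → V → Prop) (w : V → V → ℝ)
    (h : ∃ c, IsCycle E c) :
    ∃ cstar, IsSimpleCycle E cstar ∧
      ∀ c, IsCycle E c → meanWeight w cstar ≤ meanWeight w c := by
  classical
  set S : Set (List V) := {c | IsSimpleCycle E c} with hS
  have hfin : S.Finite := by
    apply (List.finite_length_le V (Fintype.card V + 1)).subset
    intro c hc
    obtain ⟨⟨hlen, _, _⟩, hnd⟩ := hc
    have h1 : c.dropLast.length ≤ Fintype.card V := hnd.length_le_card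
    have h2 : c.dropLast.length = c.length - 1 := c.length_dropLast
    simp only [Set.mem_setOf_eq]
    omega
  have hne : S.Nonempty := by
    obtain ⟨c, hc⟩ := h
    obtain ⟨s, hs, _⟩ := exists_simple_le E w c.length c le_rfl hc
    exact ⟨s, hs⟩
  obtain ⟨cstar, hcstar, hmin⟩ := Set.exists_min_image S (meanWeight w) hfin hne
  refine ⟨cstar, hcstar, fun c hc => ?_⟩
  obtain ⟨s, hs, hms⟩ := exists_simple_le E w c.length c le_rfl hc
  exact le_trans (hmin s hs) hms
end
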